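/- Let a > 0 be a real number. Then the sequence n ↦ E_{χ²_n}[u/(u+na)] converges to 1/(1+a) as n → ∞. Consequently, if S² = σ²U with U ~ χ²_n and a = τ²/σ² with σ², τ² > 0, the statistic S²/(S²+nτ²) is an asymptotically unbiased estimator of σ²/(σ²+τ²): lim_{n→∞} E[S²/(S²+nτ²)] = σ²/(σ²+τ²). -/

import Mathlib

/-!
For `u ≥ 0` and `m, a > 0`, expanding `f u = u / (u + m a)` to second order at `u = m` gives
`f u = 1/(1+a) + a/(m(1+a)²) (u - m) - a (u - m)² / (m (1+a)² (u + m a))`,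
and the remainder lies between `0` and `(u - m)² / (m² (1+a)²)`. If `m` is the mean of a
distribution on `[0, ∞)`, the linear term integrates to zero, so
`1/(1+a) - Var / (m² (1+a)²) ≤ E f ≤ 1/(1+a)`.
For `χ²_n` the mean is `n` and the variance `2n`, so the gap is `O(1/n)`.
The second limit is the first one after cancelling `σ²`.
-/

open MeasureTheory ProbabilityTheory Filter

/-- The chi-square distribution with `m` degrees of freedom: the Gamma distribution
with shape `m/2` and rate `1/2`. -/
noncomputable def chiSq (m : ℕ) : Measure ℝ := gammaMeasure ((m : ℝ) / 2) (1 / 2)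

/-- Expectation of `f` under the chi-square distribution with `m` degrees of freedom. -/
noncomputable def chiSqExp (m : ℕ) (f : ℝ → ℝ) : ℝ := ∫ u, f u ∂(chiSq m)

open Real Set

namespace ProbabilityTheory

variable {a r : ℝ}

lemma gammaMeasure_ae_nonneg : ∀ᵐ x ∂gammaMeasure a r, 0 ≤ x := by
  simp_rw [ae_iff, not_le, Iio_def]
  rw [gammaMeasure, withDensity_apply _ measurableSet_Iio]
  exact lintegral_gammaPDF_of_nonpos le_rfl

lemma integrable_gammaMeasure_iff (ha : 0 < a) (hr : 0 < r) {g : ℝ → ℝ} :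
    Integrable g (gammaMeasure a r) ↔ Integrable (fun x => gammaPDFReal a r x * g x) := by
  rw [gammaMeasure, integrable_withDensity_iff_integrable_smul' (f := gammaPDF a r)
    (measurable_gammaPDFReal a r).ennreal_ofReal (ae_of_all _ fun _ => ENNReal.ofReal_lt_top)]
  simp_rw [gammaPDF, ENNReal.toReal_ofReal (gammaPDFReal_nonneg ha hr _), smul_eq_mul]

lemma integral_gammaMeasure (ha : 0 < a) (hr : 0 < r) (g : ℝ → ℝ) :
    ∫ x, g x ∂gammaMeasure a r = ∫ x, gammaPDFReal a r x * g x := by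
  rw [gammaMeasure, integral_withDensity_eq_integral_toReal_smul (f := gammaPDF a r)
    (measurable_gammaPDFReal a r).ennreal_ofReal (ae_of_all _ fun _ => ENNReal.ofReal_lt_top)]
  simp_rw [gammaPDF, ENNReal.toReal_ofReal (gammaPDFReal_nonneg ha hr _), smul_eq_mul]

lemma gammaPDFReal_mul_pow_ae_eq (k : ℕ) :
    (fun x => gammaPDFReal a r x * x ^ k) =ᵐ[volume]
      (Ioi 0).indicator fun x => r ^ a / Gamma a * (x ^ (a + k - 1) * exp (-(r * x))) := by
  filter_upwards [Measure.ae_ne volume 0] with x hx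
  rcases hx.lt_or_gt with hneg | hpos
  · simp [gammaPDFReal, hneg.not_ge, hneg.not_gt]
  · rw [indicator_of_mem (mem_Ioi.2 hpos), gammaPDFReal, if_pos hpos.le, ← rpow_natCast,
      show a + k - 1 = (a - 1) + k by ring, rpow_add hpos]
    ring

lemma integrable_pow_gammaMeasure (ha : 0 < a) (hr : 0 < r) (k : ℕ) :
    Integrable (fun x => x ^ k) (gammaMeasure a r) := by
  rw [integrable_gammaMeasure_iff ha hr, integrable_congr (gammaPDFReal_mul_pow_ae_eq k),
    integrable_indicator_iff measurableSet_Ioi]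
  have h := integrableOn_rpow_mul_exp_neg_mul_rpow (s := a + k - 1) (p := 1)
    (by linarith [k.cast_nonneg (α := ℝ)]) one_pos hr
  simp only [rpow_one, neg_mul] at h
  exact h.const_mul _

lemma integral_pow_gammaMeasure (ha : 0 < a) (hr : 0 < r) (k : ℕ) :
    ∫ x, x ^ k ∂gammaMeasure a r = Gamma (a + k) / Gamma a / r ^ k := by
  rw [integral_gammaMeasure ha hr, integral_congr_ae (gammaPDFReal_mul_pow_ae_eq k),
    integral_indicator measurableSet_Ioi, integral_const_mul,
    integral_rpow_mul_exp_neg_mul_Ioi (by positivity) hr, ← rpow_natCast r k, one_div,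
    inv_rpow hr.le, rpow_add hr]
  field_simp [(Gamma_pos_of_pos ha).ne']

lemma integral_id_gammaMeasure (ha : 0 < a) (hr : 0 < r) :
    ∫ x, x ∂gammaMeasure a r = a / r := by
  have h := integral_pow_gammaMeasure ha hr 1
  simp only [pow_one, Nat.cast_one] at h
  rw [h, Gamma_add_one ha.ne']
  field_simp [(Gamma_pos_of_pos ha).ne']

lemma memLp_id_gammaMeasure (ha : 0 < a) (hr : 0 < r) : MemLp id 2 (gammaMeasure a r) :=
  (memLp_two_iff_integrable_sq measurable_id.aestronglyMeasurable).2
    (integrable_pow_gammaMeasure ha hr 2)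

lemma variance_id_gammaMeasure (ha : 0 < a) (hr : 0 < r) :
    variance id (gammaMeasure a r) = a / r ^ 2 := by
  have := isProbabilityMeasure_gammaMeasure ha hr
  rw [variance_eq_sub (memLp_id_gammaMeasure ha hr)]
  simp only [Pi.pow_apply, id]
  rw [integral_pow_gammaMeasure ha hr 2, integral_id_gammaMeasure ha hr, Nat.cast_ofNat,
    show a + 2 = (a + 1) + 1 by ring, Gamma_add_one (by positivity), Gamma_add_one ha.ne']
  field_simp [(Gamma_pos_of_pos ha).ne']
  ring

end ProbabilityTheory

section TangentBounds

variable {u m a : ℝ}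

lemma div_add_mul_eq_tangent_sub (hu : 0 ≤ u) (hm : 0 < m) (ha : 0 < a) :
    u / (u + m * a) = 1 / (1 + a) + a / (m * (1 + a) ^ 2) * (u - m)
      - a * (u - m) ^ 2 / (m * (1 + a) ^ 2 * (u + m * a)) := by
  have : 0 < u + m * a := by positivity
  field_simp
  ring

lemma div_add_mul_le_tangent (hu : 0 ≤ u) (hm : 0 < m) (ha : 0 < a) :
    u / (u + m * a) ≤ 1 / (1 + a) + a / (m * (1 + a) ^ 2) * (u - m) := by
  rw [div_add_mul_eq_tangent_sub hu hm ha]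
  have : 0 ≤ a * (u - m) ^ 2 / (m * (1 + a) ^ 2 * (u + m * a)) := by positivity
  linarith

lemma tangent_sub_le_div_add_mul (hu : 0 ≤ u) (hm : 0 < m) (ha : 0 < a) :
    1 / (1 + a) + a / (m * (1 + a) ^ 2) * (u - m) - (u - m) ^ 2 / (m ^ 2 * (1 + a) ^ 2)
      ≤ u / (u + m * a) := by
  rw [div_add_mul_eq_tangent_sub hu hm ha]
  have : a * (u - m) ^ 2 / (m * (1 + a) ^ 2 * (u + m * a))
      ≤ (u - m) ^ 2 / (m ^ 2 * (1 + a) ^ 2) := by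
    rw [div_le_div_iff₀ (by positivity) (by positivity)]
    have : 0 ≤ (u - m) ^ 2 * m * (1 + a) ^ 2 * u := by positivity
    nlinarith
  linarith

end TangentBounds

section MeanVariance

variable {μ : Measure ℝ} {m a : ℝ}

lemma integrable_div_add_mul [IsFiniteMeasure μ] (hμ : ∀ᵐ u ∂μ, 0 ≤ u) (hm : 0 < m)
    (ha : 0 < a) : Integrable (fun u => u / (u + m * a)) μ := by
  refine (integrable_const 1).mono'
    (measurable_id.div (measurable_id.add_const _)).aestronglyMeasurable ?_
  filter_upwards [hμ] with u hu
  rw [Real.norm_eq_abs, abs_le]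
  constructor
  · have : 0 ≤ u / (u + m * a) := by positivity
    linarith
  · rw [div_le_one (by positivity)]
    nlinarith

lemma integrable_const_add_mul_sub [IsFiniteMeasure μ] (hint : Integrable (fun u => u) μ)
    (c k : ℝ) : Integrable (fun u => c + k * (u - m)) μ :=
  (integrable_const c).add ((hint.sub (integrable_const m)).const_mul k)

lemma integral_const_add_mul_sub [IsProbabilityMeasure μ] (hint : Integrable (fun u => u) μ)
    (hmean : ∫ u, u ∂μ = m) (c k : ℝ) : ∫ u, (c + k * (u - m)) ∂μ = c := by
  have hcen : Integrable (fun u => u - m) μ := hint.sub (integrable_const m)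
  rw [integral_add (integrable_const c) (hcen.const_mul k), integral_const_mul,
    integral_sub hint (integrable_const m)]
  simp [hmean]

lemma integral_div_add_mul_le [IsProbabilityMeasure μ] (hμ : ∀ᵐ u ∂μ, 0 ≤ u)
    (hint : Integrable (fun u => u) μ) (hmean : ∫ u, u ∂μ = m) (hm : 0 < m) (ha : 0 < a) :
    ∫ u, u / (u + m * a) ∂μ ≤ 1 / (1 + a) := calc
  ∫ u, u / (u + m * a) ∂μ
      ≤ ∫ u, (1 / (1 + a) + a / (m * (1 + a) ^ 2) * (u - m)) ∂μ := by
        refine integral_mono_ae (integrable_div_add_mul hμ hm ha)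
          (integrable_const_add_mul_sub hint _ _) ?_
        filter_upwards [hμ] with u hu using div_add_mul_le_tangent hu hm ha
  _ = 1 / (1 + a) := integral_const_add_mul_sub hint hmean _ _

lemma one_div_one_add_sub_le_integral_div_add_mul [IsProbabilityMeasure μ]
    (hμ : ∀ᵐ u ∂μ, 0 ≤ u) (hX : MemLp id 2 μ) (hmean : ∫ u, u ∂μ = m) (hm : 0 < m)
    (ha : 0 < a) :
    1 / (1 + a) - variance id μ / (m ^ 2 * (1 + a) ^ 2) ≤ ∫ u, u / (u + m * a) ∂μ := by
  have hint : Integrable (fun u => u) μ := hX.integrable one_le_two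
  have htangent :=
    integrable_const_add_mul_sub (m := m) hint (1 / (1 + a)) (a / (m * (1 + a) ^ 2))
  have hsq : Integrable (fun u => (u - m) ^ 2) μ := (hX.sub (memLp_const m)).integrable_sq
  have hvar : variance id μ = ∫ u, (u - m) ^ 2 ∂μ := by
    rw [variance_eq_integral measurable_id.aemeasurable]
    simp only [id, hmean]
  calc 1 / (1 + a) - variance id μ / (m ^ 2 * (1 + a) ^ 2)
      = ∫ u, (1 / (1 + a) + a / (m * (1 + a) ^ 2) * (u - m)
          - (u - m) ^ 2 / (m ^ 2 * (1 + a) ^ 2)) ∂μ := by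
        rw [integral_sub htangent (hsq.div_const _), integral_const_add_mul_sub hint hmean,
          integral_div, hvar]
    _ ≤ ∫ u, u / (u + m * a) ∂μ := by
        refine integral_mono_ae (htangent.sub (hsq.div_const _))
          (integrable_div_add_mul hμ hm ha) ?_
        filter_upwards [hμ] with u hu using tangent_sub_le_div_add_mul hu hm ha

end MeanVariance

section ChiSquare

variable {n : ℕ}

lemma isProbabilityMeasure_chiSq (hn : n ≠ 0) : IsProbabilityMeasure (chiSq n) :=
  isProbabilityMeasure_gammaMeasure (by positivity) one_half_pos

lemma integral_id_chiSq (hn : n ≠ 0) : ∫ u, u ∂chiSq n = n := by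
  rw [chiSq, integral_id_gammaMeasure (by positivity) one_half_pos]
  ring

lemma variance_id_chiSq (hn : n ≠ 0) : variance id (chiSq n) = 2 * n := by
  rw [chiSq, variance_id_gammaMeasure (by positivity) one_half_pos]
  ring

lemma chiSqExp_div_add_mul_mem_Icc {a : ℝ} (ha : 0 < a) (hn : n ≠ 0) :
    chiSqExp n (fun u => u / (u + n * a))
      ∈ Icc (1 / (1 + a) - 2 / (1 + a) ^ 2 / n) (1 / (1 + a)) := by
  have := isProbabilityMeasure_chiSq hn
  have hμ : ∀ᵐ u ∂chiSq n, 0 ≤ u := gammaMeasure_ae_nonneg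
  have hX : MemLp id 2 (chiSq n) := memLp_id_gammaMeasure (by positivity) one_half_pos
  have hpos : (0 : ℝ) < n := by positivity
  constructor
  · have h := one_div_one_add_sub_le_integral_div_add_mul hμ hX (integral_id_chiSq hn) hpos ha
    rwa [variance_id_chiSq hn, show 2 * (n : ℝ) / (n ^ 2 * (1 + a) ^ 2) = 2 / (1 + a) ^ 2 / n by
      field_simp] at h
  · exact integral_div_add_mul_le hμ (hX.integrable one_le_two) (integral_id_chiSq hn) hpos ha

theorem tendsto_chiSqExp_div_add_mul {a : ℝ} (ha : 0 < a) :
    Tendsto (fun n : ℕ => chiSqExp n (fun u => u / (u + n * a))) atTop (nhds (1 / (1 + a))) := by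
  have hlower : Tendsto (fun n : ℕ => 1 / (1 + a) - 2 / (1 + a) ^ 2 / n) atTop
      (nhds (1 / (1 + a))) := by
    simpa using (tendsto_const_nhds (x := 1 / (1 + a))).sub
      (tendsto_const_div_atTop_nhds_zero_nat (2 / (1 + a) ^ 2))
  have hbounds := (eventually_ne_atTop 0).mono fun n hn => chiSqExp_div_add_mul_mem_Icc ha hn
  exact tendsto_of_tendsto_of_tendsto_of_le_of_le' hlower tendsto_const_nhds
    (hbounds.mono fun _ h => h.1) (hbounds.mono fun _ h => h.2)

end ChiSquare

theorem stmt_4_general (a : ℝ) (ha : 0 < a) (σ2 τ2 : ℝ) (hσ2 : 0 < σ2)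
    (haeq : a = τ2 / σ2) :
    Tendsto (fun n : ℕ => chiSqExp n (fun u => u / (u + n * a))) atTop (nhds (1 / (1 + a))) ∧
    Tendsto (fun n : ℕ => chiSqExp n (fun u => (σ2 * u) / (σ2 * u + n * τ2))) atTop
      (nhds (σ2 / (σ2 + τ2))) := by
  have hτ2_eq : τ2 = σ2 * a := by rw [haeq]; field_simp
  have hscale : ∀ n : ℕ,
      (fun u => (σ2 * u) / (σ2 * u + n * τ2)) = fun u => u / (u + n * a) := by
    intro n
    funext u
    rw [hτ2_eq, show σ2 * u + n * (σ2 * a) = σ2 * (u + n * a) by ring,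
      mul_div_mul_left _ _ hσ2.ne']
  have hlimit : σ2 / (σ2 + τ2) = 1 / (1 + a) := by
    rw [hτ2_eq, show σ2 + σ2 * a = σ2 * (1 + a) by ring, ← div_div, div_self hσ2.ne']
  simp only [hscale, hlimit]
  exact ⟨tendsto_chiSqExp_div_add_mul ha, tendsto_chiSqExp_div_add_mul ha⟩

theorem stmt_4 (a : ℝ) (ha : 0 < a) (σ2 τ2 : ℝ) (hσ2 : 0 < σ2) (hτ2 : 0 < τ2)
    (haeq : a = τ2 / σ2) :
    Tendsto (fun n : ℕ => chiSqExp n (fun u => u / (u + n * a))) atTop (nhds (1 / (1 + a))) ∧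
    Tendsto (fun n : ℕ => chiSqExp n (fun u => (σ2 * u) / (σ2 * u + n * τ2))) atTop
      (nhds (σ2 / (σ2 + τ2))) :=
  stmt_4_general a ha σ2 τ2 hσ2 haeq
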